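/- arXiv:2505.09964 — 3 statements merged into one kernel-verified Lean document; each statement's English description precedes it below -/
import Mathlib

section
/- Let ν ≥ 0 be a real number. Then v(J_ν)(x) ≥ 0 for all x > 0. -/
/-- v h = (deriv h)^2 - (second derivative of h) * h. -/
noncomputable def v (f : ℝ → ℝ) (x : ℝ) : ℝ := (deriv f x) ^ 2 - deriv^[2] f x * f x

/-- Bessel function of the first kind (for `x > 0`). -/
noncomputable def besselJ (ν : ℝ) (x : ℝ) : ℝ :=
  ∑' k : ℕ, (-1 : ℝ) ^ k / ((Nat.factorial k : ℝ) * Real.Gamma ((k : ℝ) + ν + 1)) *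
    (x / 2) ^ (2 * (k : ℝ) + ν)

/-!
Write `J_ν(x) = (x/2)^ν F(x²/4)` with the entire series `F(t) = ∑ (-1)^k t^k / (k! Γ(k+ν+1))`;
the coefficient recursion makes `F` solve `t F'' + (ν+1) F' + F = 0`, so `J = J_ν` solves Bessel's
equation `x² J'' + x J' + (x² - ν²) J = 0` on `x > 0`. By that equation the quantity
`W = x² J'² + x J J' + (x² - ν²) J²` equals `x² v(J)` and has derivative `x J'² + (x + ν²/x) J² ≥ 0`,
so `W` is nondecreasing on `(0, ∞)`; as `x → 0⁺` it behaves like `ν (x/2)^{2ν} F(0)²`, which tends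
to `0` for every `ν ≥ 0`. Hence `W ≥ 0`.
-/

open Set Filter Topology FormalMultilinearSeries
open scoped Nat

lemma v_eq_of_hasDerivAt {f f' : ℝ → ℝ} {f'' x : ℝ} (hf : ∀ᶠ y in 𝓝 x, HasDerivAt f (f' y) y)
    (hf' : HasDerivAt f' f'' x) : v f x = f' x ^ 2 - f'' * f x := by
  have hderiv : deriv f =ᶠ[𝓝 x] f' := hf.mono fun y hy ↦ hy.deriv
  rw [v, hf.self_of_nhds.deriv, Function.iterate_succ_apply', Function.iterate_one,
    hderiv.deriv_eq, hf'.deriv]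

section FactorialDecay

variable {c : ℕ → ℝ} {C : ℝ}

def derivCoeff (c : ℕ → ℝ) (k : ℕ) : ℝ := (k + 1) * c (k + 1)

lemma abs_derivCoeff_le (hc : ∀ k, |c k| ≤ C / k !) (k : ℕ) : |derivCoeff c k| ≤ C / k ! := by
  have hk : (0 : ℝ) < k + 1 := by positivity
  rw [derivCoeff, abs_mul, abs_of_pos hk]
  calc (k + 1) * |c (k + 1)| ≤ (k + 1) * (C / (k + 1)!) := by gcongr; exact hc _
    _ = C / k ! := by rw [Nat.factorial_succ, Nat.cast_mul]; push_cast; field_simp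

lemma summable_mul_pow_of_abs_le (hc : ∀ k, |c k| ≤ C / k !) (t : ℝ) :
    Summable fun k ↦ c k * t ^ k := by
  refine .of_norm_bounded ((Real.summable_pow_div_factorial |t|).mul_left C) fun k ↦ ?_
  calc ‖c k * t ^ k‖ = |c k| * |t| ^ k := by
        rw [norm_mul, norm_pow, Real.norm_eq_abs, Real.norm_eq_abs]
    _ ≤ C / k ! * |t| ^ k := by gcongr; exact hc k
    _ = C * (|t| ^ k / k !) := by ring

lemma ofScalarsSum_eq_tsum_mul_pow (t : ℝ) : ofScalarsSum c t = ∑' k, c k * t ^ k := by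
  simp only [ofScalars_sum_eq, smul_eq_mul]

lemma norm_mul_deriv_pow_le (hc : ∀ k, |c k| ≤ C / k !) {R y : ℝ} (hR : 1 ≤ R) (hy : |y| ≤ R)
    (k : ℕ) : ‖c k * (k * y ^ (k - 1))‖ ≤ C * ((2 * R) ^ k / k !) := by
  have hk : (k : ℝ) ≤ 2 ^ k := mod_cast Nat.lt_two_pow_self.le
  have hyk : |y| ^ (k - 1) ≤ R ^ k :=
    (pow_le_pow_left₀ (abs_nonneg y) hy _).trans (pow_le_pow_right₀ hR (Nat.sub_le k 1))
  calc ‖c k * (k * y ^ (k - 1))‖ = |c k| * (k * |y| ^ (k - 1)) := by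
        simp only [norm_mul, norm_pow, Real.norm_eq_abs, Nat.abs_cast]
    _ ≤ C / k ! * (2 ^ k * R ^ k) := by gcongr; exacts [(abs_nonneg _).trans (hc k), hc k]
    _ = C * ((2 * R) ^ k / k !) := by ring

lemma hasDerivAt_ofScalarsSum (hc : ∀ k, |c k| ≤ C / k !) (t : ℝ) :
    HasDerivAt (ofScalarsSum c) (ofScalarsSum (derivCoeff c) t) t := by
  set R := |t| + 1
  have hR : 1 ≤ R := by simp [R]
  have ht : t ∈ Ioo (-R) R := abs_lt.mp (lt_add_one _)
  have hu := (Real.summable_pow_div_factorial (2 * R)).mul_left C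
  have hsum := hasDerivAt_tsum_of_isPreconnected hu isOpen_Ioo isPreconnected_Ioo
    (fun k y _ ↦ (hasDerivAt_pow k y).const_mul (c k))
    (fun k y hy ↦ norm_mul_deriv_pow_le hc hR (abs_le.mpr ⟨hy.1.le, hy.2.le⟩) k)
    ht (summable_mul_pow_of_abs_le hc t) ht
  rw [show ofScalarsSum c = _ from funext ofScalarsSum_eq_tsum_mul_pow,
    ofScalarsSum_eq_tsum_mul_pow]
  refine hsum.congr_deriv ?_
  rw [tsum_eq_zero_add' ?_]
  · simp only [derivCoeff, Nat.cast_zero, zero_mul, mul_zero, zero_add, Nat.cast_add_one,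
      Nat.add_sub_cancel]
    exact tsum_congr fun k ↦ by ring
  · exact (summable_mul_pow_of_abs_le (abs_derivCoeff_le hc) t).congr fun k ↦ by
      simp only [derivCoeff, Nat.cast_add_one, Nat.add_sub_cancel]; ring

lemma hasSum_mul_ofScalarsSum_derivCoeff (hc : ∀ k, |c k| ≤ C / k !) (t : ℝ) :
    HasSum (fun k ↦ k * c k * t ^ k) (t * ofScalarsSum (derivCoeff c) t) := by
  rw [ofScalarsSum_eq_tsum_mul_pow, ← hasSum_nat_add_iff' 1]
  simpa [derivCoeff, pow_succ, mul_assoc, mul_comm, mul_left_comm] using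
    ((summable_mul_pow_of_abs_le (abs_derivCoeff_le hc) t).hasSum.mul_left t)

end FactorialDecay

noncomputable def besselEnergy (ν : ℝ) (J J₁ : ℝ → ℝ) (x : ℝ) : ℝ :=
  x ^ 2 * J₁ x ^ 2 + x * J x * J₁ x + (x ^ 2 - ν ^ 2) * J x ^ 2

section BesselEquation

variable {J J₁ J₂ : ℝ → ℝ} {ν x : ℝ}

lemma hasDerivAt_besselEnergy (hJ : HasDerivAt J (J₁ x) x) (hJ₁ : HasDerivAt J₁ (J₂ x) x)
    (hode : x ^ 2 * J₂ x + x * J₁ x + (x ^ 2 - ν ^ 2) * J x = 0) (hx : x ≠ 0) :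
    HasDerivAt (besselEnergy ν J J₁) (x * J₁ x ^ 2 + (x + ν ^ 2 / x) * J x ^ 2) x := by
  have hsq := hasDerivAt_pow 2 x
  refine ((((hsq.mul (hJ₁.pow 2)).add (((hasDerivAt_id' x).mul hJ).mul hJ₁)).add
    ((hsq.sub_const (ν ^ 2)).mul (hJ.pow 2)))).congr_deriv ?_
  simp only [Pi.mul_apply, Pi.pow_apply]
  field_simp
  linear_combination (J x + 2 * x * J₁ x) * hode

lemma besselEnergy_nonneg (hJ : ∀ x > 0, HasDerivAt J (J₁ x) x)
    (hJ₁ : ∀ x > 0, HasDerivAt J₁ (J₂ x) x)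
    (hode : ∀ x > 0, x ^ 2 * J₂ x + x * J₁ x + (x ^ 2 - ν ^ 2) * J x = 0)
    (hlim : Tendsto (besselEnergy ν J J₁) (𝓝[>] 0) (𝓝 0)) (hx : 0 < x) :
    0 ≤ besselEnergy ν J J₁ x := by
  have hderiv : ∀ y > 0, HasDerivAt (besselEnergy ν J J₁)
      (y * J₁ y ^ 2 + (y + ν ^ 2 / y) * J y ^ 2) y := fun y hy ↦
    hasDerivAt_besselEnergy (hJ y hy) (hJ₁ y hy) (hode y hy) hy.ne'
  have hmono : MonotoneOn (besselEnergy ν J J₁) (Ioi 0) := by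
    refine monotoneOn_of_hasDerivWithinAt_nonneg
      (f' := fun y ↦ y * J₁ y ^ 2 + (y + ν ^ 2 / y) * J y ^ 2) (convex_Ioi 0)
      (fun y hy ↦ (hderiv y hy).continuousAt.continuousWithinAt) (fun y hy ↦ ?_) fun y hy ↦ ?_
    · rw [interior_Ioi] at hy
      exact (hderiv y hy).hasDerivWithinAt
    · rw [interior_Ioi] at hy
      have hy : (0 : ℝ) < y := hy
      positivity
  refine le_of_tendsto hlim ?_
  filter_upwards [Ioc_mem_nhdsGT hx] with y hy
  exact hmono hy.1 hx hy.2

theorem sq_sub_mul_nonneg_of_besselEquation (hJ : ∀ x > 0, HasDerivAt J (J₁ x) x)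
    (hJ₁ : ∀ x > 0, HasDerivAt J₁ (J₂ x) x)
    (hode : ∀ x > 0, x ^ 2 * J₂ x + x * J₁ x + (x ^ 2 - ν ^ 2) * J x = 0)
    (hlim : Tendsto (besselEnergy ν J J₁) (𝓝[>] 0) (𝓝 0)) (hx : 0 < x) :
    0 ≤ J₁ x ^ 2 - J₂ x * J x := by
  have hE : besselEnergy ν J J₁ x = x ^ 2 * (J₁ x ^ 2 - J₂ x * J x) := by
    rw [besselEnergy]
    linear_combination J x * hode x hx
  have := besselEnergy_nonneg hJ hJ₁ hode hlim hx
  rw [hE] at this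
  exact (mul_nonneg_iff_of_pos_left (by positivity)).mp this

end BesselEquation

lemma Real.Gamma_le_Gamma_add_nat {s : ℝ} (hs : 1 ≤ s) (k : ℕ) :
    Real.Gamma s ≤ Real.Gamma (s + k) := by
  induction k with
  | zero => simp
  | succ k ih =>
    have hsk : 1 ≤ s + k := by linarith [(Nat.cast_nonneg k : (0 : ℝ) ≤ k)]
    rw [Nat.cast_succ, ← add_assoc, Real.Gamma_add_one (by linarith)]
    nlinarith [Real.Gamma_pos_of_pos (by linarith : 0 < s + k)]

section Bessel

variable {ν x : ℝ}

noncomputable def besselCoeff (ν : ℝ) (k : ℕ) : ℝ :=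
  (-1) ^ k / (k ! * Real.Gamma (k + ν + 1))

lemma abs_besselCoeff_le (hν : 0 ≤ ν) (k : ℕ) :
    |besselCoeff ν k| ≤ (Real.Gamma (ν + 1))⁻¹ / k ! := by
  have hΓ : 0 < Real.Gamma (ν + 1) := Real.Gamma_pos_of_pos (by linarith)
  have hΓk : Real.Gamma (ν + 1) ≤ Real.Gamma (k + ν + 1) := by
    simpa [add_comm, add_left_comm, add_assoc] using
      Real.Gamma_le_Gamma_add_nat (s := ν + 1) (by linarith) k
  rw [besselCoeff, abs_div, abs_pow, abs_neg, abs_one, one_pow, abs_of_pos (by positivity)]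
  calc 1 / (k ! * Real.Gamma (k + ν + 1)) ≤ 1 / (k ! * Real.Gamma (ν + 1)) := by gcongr
    _ = (Real.Gamma (ν + 1))⁻¹ / k ! := by ring

lemma mul_besselCoeff_succ (hν : -1 < ν) (k : ℕ) :
    (k + 1) * (k + ν + 1) * besselCoeff ν (k + 1) = -besselCoeff ν k := by
  have hk : 0 < (k : ℝ) + ν + 1 := by linarith [(Nat.cast_nonneg k : (0 : ℝ) ≤ k)]
  have hΓ : Real.Gamma (k + ν + 1) ≠ 0 := (Real.Gamma_pos_of_pos hk).ne'
  rw [besselCoeff, besselCoeff, Nat.factorial_succ, Nat.cast_mul, Nat.cast_succ,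
    show ((k : ℝ) + 1 + ν + 1) = k + ν + 1 + 1 by ring, Real.Gamma_add_one hk.ne', pow_succ]
  field_simp

lemma ofScalarsSum_besselCoeff_ode (hν : 0 ≤ ν) (t : ℝ) :
    t * ofScalarsSum (derivCoeff (derivCoeff (besselCoeff ν))) t
      + (ν + 1) * ofScalarsSum (derivCoeff (besselCoeff ν)) t + ofScalarsSum (besselCoeff ν) t
      = 0 := by
  have hc := abs_besselCoeff_le hν
  have hd := abs_derivCoeff_le hc
  have h := ((hasSum_mul_ofScalarsSum_derivCoeff hd t).add
    ((summable_mul_pow_of_abs_le hd t).hasSum.mul_left (ν + 1))).add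
    (summable_mul_pow_of_abs_le hc t).hasSum
  have hzero : ∀ k : ℕ, k * derivCoeff (besselCoeff ν) k * t ^ k
      + (ν + 1) * (derivCoeff (besselCoeff ν) k * t ^ k) + besselCoeff ν k * t ^ k = 0 := by
    intro k
    rw [derivCoeff]
    linear_combination t ^ k * mul_besselCoeff_succ (by linarith) k
  rw [ofScalarsSum_eq_tsum_mul_pow (c := besselCoeff ν),
    ofScalarsSum_eq_tsum_mul_pow (c := derivCoeff (besselCoeff ν))]
  exact h.unique (by simpa only [hzero] using hasSum_zero)

noncomputable def besselJDeriv (ν x : ℝ) : ℝ :=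
  (x / 2) ^ ν * (ν / x * ofScalarsSum (besselCoeff ν) ((x / 2) ^ 2)
    + x / 2 * ofScalarsSum (derivCoeff (besselCoeff ν)) ((x / 2) ^ 2))

noncomputable def besselJDeriv2 (ν x : ℝ) : ℝ :=
  (x / 2) ^ ν * ((ν ^ 2 - ν) / x ^ 2 * ofScalarsSum (besselCoeff ν) ((x / 2) ^ 2)
    + (ν + 1 / 2) * ofScalarsSum (derivCoeff (besselCoeff ν)) ((x / 2) ^ 2)
    + (x / 2) ^ 2 * ofScalarsSum (derivCoeff (derivCoeff (besselCoeff ν))) ((x / 2) ^ 2))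

lemma besselJ_eq (hx : 0 < x) :
    besselJ ν x = (x / 2) ^ ν * ofScalarsSum (besselCoeff ν) ((x / 2) ^ 2) := by
  rw [besselJ, ofScalarsSum_eq_tsum_mul_pow, ← tsum_mul_left]
  refine tsum_congr fun k ↦ ?_
  rw [Real.rpow_add (by positivity), show 2 * (k : ℝ) = ((2 * k : ℕ) : ℝ) by push_cast; ring,
    Real.rpow_natCast, pow_mul, besselCoeff]
  ring

lemma HasDerivAt.comp_half_sq {g : ℝ → ℝ} {g' : ℝ} (hg : HasDerivAt g g' ((x / 2) ^ 2)) :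
    HasDerivAt (fun y ↦ g ((y / 2) ^ 2)) (x / 2 * g') x := by
  refine (hg.comp x (((hasDerivAt_id' x).div_const 2).pow 2)).congr_deriv ?_
  ring

lemma hasDerivAt_half_rpow (hx : 0 < x) :
    HasDerivAt (fun y ↦ (y / 2) ^ ν) (ν / x * (x / 2) ^ ν) x := by
  refine ((Real.hasDerivAt_rpow_const (Or.inl (by positivity))).comp x
    ((hasDerivAt_id' x).div_const 2)).congr_deriv ?_
  rw [Real.rpow_sub (by positivity), Real.rpow_one]
  field_simp

lemma hasDerivAt_besselJ (hν : 0 ≤ ν) (hx : 0 < x) :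
    HasDerivAt (besselJ ν) (besselJDeriv ν x) x := by
  have hc := abs_besselCoeff_le hν
  refine (((hasDerivAt_half_rpow (ν := ν) hx).mul
    (hasDerivAt_ofScalarsSum hc _).comp_half_sq).congr_deriv ?_).congr_of_eventuallyEq ?_
  · rw [besselJDeriv]; ring
  · filter_upwards [Ioi_mem_nhds hx] with y hy using besselJ_eq hy

lemma hasDerivAt_besselJDeriv (hν : 0 ≤ ν) (hx : 0 < x) :
    HasDerivAt (besselJDeriv ν) (besselJDeriv2 ν x) x := by
  have hc := abs_besselCoeff_le hν
  have hF := (hasDerivAt_ofScalarsSum hc _).comp_half_sq (x := x)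
  have hF' := (hasDerivAt_ofScalarsSum (abs_derivCoeff_le hc) _).comp_half_sq (x := x)
  refine ((hasDerivAt_half_rpow hx).mul ((((hasDerivAt_inv hx.ne').const_mul ν).mul hF).add
    (((hasDerivAt_id' x).div_const 2).mul hF'))).congr_deriv ?_
  simp only [Pi.add_apply, Pi.mul_apply, besselJDeriv2]
  generalize ofScalarsSum (derivCoeff (derivCoeff (besselCoeff ν))) ((x / 2) ^ 2) = F₂
  generalize ofScalarsSum (derivCoeff (besselCoeff ν)) ((x / 2) ^ 2) = F₁
  generalize ofScalarsSum (besselCoeff ν) ((x / 2) ^ 2) = F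
  field_simp
  ring

lemma besselJ_ode (hν : 0 ≤ ν) (hx : 0 < x) :
    x ^ 2 * besselJDeriv2 ν x + x * besselJDeriv ν x + (x ^ 2 - ν ^ 2) * besselJ ν x = 0 := by
  rw [besselJDeriv2, besselJDeriv, besselJ_eq hx]
  have h := ofScalarsSum_besselCoeff_ode hν ((x / 2) ^ 2)
  generalize ofScalarsSum (derivCoeff (derivCoeff (besselCoeff ν))) ((x / 2) ^ 2) = F₂ at h ⊢
  generalize ofScalarsSum (derivCoeff (besselCoeff ν)) ((x / 2) ^ 2) = F₁ at h ⊢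
  generalize ofScalarsSum (besselCoeff ν) ((x / 2) ^ 2) = F at h ⊢
  field_simp
  linear_combination 4 * (x / 2) ^ ν * x ^ 2 * h

lemma tendsto_besselEnergy (hν : 0 ≤ ν) :
    Tendsto (besselEnergy ν (besselJ ν) (besselJDeriv ν)) (𝓝[>] 0) (𝓝 0) := by
  have hc := abs_besselCoeff_le hν
  have hF : Continuous (ofScalarsSum (besselCoeff ν)) :=
    continuous_iff_continuousAt.2 fun t ↦ (hasDerivAt_ofScalarsSum hc t).continuousAt
  have hF₁ : Continuous (ofScalarsSum (derivCoeff (besselCoeff ν))) :=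
    continuous_iff_continuousAt.2 fun t ↦
      (hasDerivAt_ofScalarsSum (abs_derivCoeff_le hc) t).continuousAt
  set F := fun y : ℝ ↦ ofScalarsSum (besselCoeff ν) ((y / 2) ^ 2)
  set H := fun y : ℝ ↦
    ν * F y + y ^ 2 / 2 * ofScalarsSum (derivCoeff (besselCoeff ν)) ((y / 2) ^ 2)
  set g := fun y : ℝ ↦ ((y / 2) ^ ν) ^ 2 * (H y ^ 2 + F y * H y + (y ^ 2 - ν ^ 2) * F y ^ 2)
  have hg : ContinuousAt g 0 := by
    have : ContinuousAt (fun y : ℝ ↦ (y / 2) ^ ν) 0 :=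
      (continuousAt_id.div_const 2).rpow_const (Or.inr hν)
    fun_prop
  have hg0 : g 0 = 0 := by
    simp only [g, H, F]
    rcases hν.eq_or_lt with rfl | hν
    · ring
    · simp [Real.zero_rpow hν.ne']
  have hlim := hg.tendsto.mono_left (nhdsWithin_le_nhds (s := Ioi 0))
  rw [hg0] at hlim
  refine hlim.congr' ?_
  filter_upwards [self_mem_nhdsWithin] with y (hy : 0 < y)
  simp only [g, H, F, besselEnergy, besselJDeriv, besselJ_eq hy]
  generalize ofScalarsSum (derivCoeff (besselCoeff ν)) ((y / 2) ^ 2) = F₁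
  generalize ofScalarsSum (besselCoeff ν) ((y / 2) ^ 2) = F₀
  field_simp

end Bessel

theorem stmt_6 (ν : ℝ) (hν : 0 ≤ ν) : ∀ x > (0 : ℝ), 0 ≤ v (besselJ ν) x := by
  intro x hx
  rw [v_eq_of_hasDerivAt (eventually_gt_nhds hx |>.mono fun y hy ↦ hasDerivAt_besselJ hν hy)
    (hasDerivAt_besselJDeriv hν hx)]
  exact sq_sub_mul_nonneg_of_besselEquation (fun y hy ↦ hasDerivAt_besselJ hν hy)
    (fun y hy ↦ hasDerivAt_besselJDeriv hν hy) (fun y hy ↦ besselJ_ode hν hy)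
    (tendsto_besselEnergy hν) hx
end

section
/- Let n ≥ 1 be a natural number. Then v(f_n) and its derivative v(f_n)' are positive and monotone increasing on (0,∞), and the second derivative v(f_n)'' is nonnegative on (0,∞). -/
/-- `fn n x = √(π/2)·x^(n+1/2)·J_(n+1/2)(x)`, via the equivalent recursive definition
`fn 0 = sin`, `fn (n+1) x = ∫_0^x t·fn n t dt`. -/
noncomputable def fn : ℕ → ℝ → ℝ
  | 0 => fun x => Real.sin x
  | n + 1 => fun x => ∫ t in (0:ℝ)..x, t * fn n t

/-!
Write `f = fn n` and `E = energy f = f² + f'²`. From `x f'' = 2n f' - x f` one gets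
`x E' = 4n f'²`, `x v' = E + (2n - 1) v` and `x² v'' = 4n f'² + (2n - 2) (E + (2n - 1) v)`.
Hence `E` is nondecreasing on `(0, ∞)`, so positive there because `f > 0` on `(0, π)`. Then
`v / x^(2n-1)` has derivative `E / x^(2n) > 0` and tends to `0` at `0⁺` since `v = O(x^(4n))`,
so `v > 0`; the last two identities then give `v' > 0` and `v'' ≥ 0`.
-/

open Set Filter Topology Asymptotics
open scoped ContDiff

section Calculus

variable {g : ℝ → ℝ}

lemma monotoneOn_Ioi_of_deriv_nonneg (hg : DifferentiableOn ℝ g (Ioi 0))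
    (hg' : ∀ x, 0 < x → 0 ≤ deriv g x) : MonotoneOn g (Ioi 0) :=
  monotoneOn_of_deriv_nonneg (convex_Ioi 0) hg.continuousOn (by simpa using hg)
    (by simpa using hg')

lemma add_mul_deriv_eq_deriv_of_mul_eq {h : ℝ → ℝ} {x : ℝ} (hg : DifferentiableAt ℝ g x)
    (hgh : ∀ y, y * g y = h y) : g x + x * deriv g x = deriv h x := by
  rw [← funext hgh, ((hasDerivAt_id' x).fun_mul hg.hasDerivAt).deriv, one_mul]

theorem pos_of_natCast_mul_lt_mul_deriv {k : ℕ} (hg : DifferentiableOn ℝ g (Ioi 0))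
    (hg' : ∀ x, 0 < x → k * g x < x * deriv g x)
    (hg₀ : g =o[𝓝[>] 0] fun x => x ^ k) {x : ℝ} (hx : 0 < x) : 0 < g x := by
  set w : ℝ → ℝ := fun y => g y * y ^ (-(k : ℤ))
  have hw_div : w = fun y => g y / y ^ k := by
    funext y; simp [w, zpow_neg, div_eq_mul_inv]
  have hw_deriv : ∀ y, 0 < y → HasDerivAt w
      (y ^ (-(k : ℤ) - 1) * (y * deriv g y - k * g y)) y := by
    intro y hy
    have hgy := (hg.differentiableAt (Ioi_mem_nhds hy)).hasDerivAt
    refine (hgy.mul (hasDerivAt_zpow (-(k : ℤ)) y (Or.inl hy.ne'))).congr_deriv ?_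
    rw [zpow_sub_one₀ hy.ne']
    field_simp
    push_cast
    ring
  have hw_mono : StrictMonoOn w (Ioi 0) := by
    refine strictMonoOn_of_deriv_pos (convex_Ioi 0)
      (fun y hy => (hw_deriv y hy).continuousAt.continuousWithinAt) fun y hy => ?_
    rw [interior_Ioi] at hy
    rw [(hw_deriv y hy).deriv]
    exact mul_pos (zpow_pos hy _) (sub_pos.2 (hg' y hy))
  have hw_nonneg : ∀ y, 0 < y → 0 ≤ w y := by
    intro y hy
    refine le_of_tendsto (hw_div ▸ hg₀.tendsto_div_nhds_zero) ?_
    filter_upwards [Ioo_mem_nhdsGT hy] with z hz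
    exact (hw_mono hz.1 hy hz.2).le
  have hwx : 0 < w x :=
    (hw_nonneg _ (half_pos hx)).trans_lt (hw_mono (half_pos hx) hx (half_lt_self hx))
  simpa [hw_div, div_pos_iff, pow_pos hx] using hwx

end Calculus

lemma v_apply (f : ℝ → ℝ) (x : ℝ) : v f x = deriv f x ^ 2 - deriv (deriv f) x * f x := rfl

noncomputable def energy (f : ℝ → ℝ) (x : ℝ) : ℝ := f x ^ 2 + deriv f x ^ 2

section BesselEquation

variable {f : ℝ → ℝ} {ν : ℝ} (hf : ContDiff ℝ ∞ f)
  (hode : ∀ x, x * deriv (deriv f) x = 2 * ν * deriv f x - x * f x)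
include hf

lemma differentiable_iterate_deriv (k : ℕ) : Differentiable ℝ (deriv^[k] f) :=
  (hf.iterate_deriv k).differentiable (by simp)

lemma hasDerivAt_energy (x : ℝ) :
    HasDerivAt (energy f) (2 * f x * deriv f x + 2 * deriv f x * deriv (deriv f) x) x := by
  have h₀ : HasDerivAt f (deriv f x) x := (differentiable_iterate_deriv hf 0 x).hasDerivAt
  have h₁ : HasDerivAt (deriv f) (deriv (deriv f) x) x :=
    (differentiable_iterate_deriv hf 1 x).hasDerivAt
  exact ((h₀.pow 2).fun_add (h₁.pow 2)).congr_deriv (by ring)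

lemma hasDerivAt_v (x : ℝ) :
    HasDerivAt (v f) (deriv f x * deriv (deriv f) x - deriv (deriv (deriv f)) x * f x) x := by
  have h₀ : HasDerivAt f (deriv f x) x := (differentiable_iterate_deriv hf 0 x).hasDerivAt
  have h₁ : HasDerivAt (deriv f) (deriv (deriv f) x) x :=
    (differentiable_iterate_deriv hf 1 x).hasDerivAt
  have h₂ : HasDerivAt (deriv (deriv f)) (deriv (deriv (deriv f)) x) x :=
    (differentiable_iterate_deriv hf 2 x).hasDerivAt
  exact ((h₁.pow 2).fun_sub (h₂.fun_mul h₀)).congr_deriv (by ring)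

lemma differentiable_v : Differentiable ℝ (v f) := fun x => (hasDerivAt_v hf x).differentiableAt

lemma differentiable_deriv_v : Differentiable ℝ (deriv (v f)) := by
  rw [funext fun x => (hasDerivAt_v hf x).deriv]
  have := differentiable_iterate_deriv hf
  exact ((this 1).fun_mul (this 2)).fun_sub ((this 3).fun_mul (this 0))

include hode

lemma mul_deriv_energy (x : ℝ) : x * deriv (energy f) x = 4 * ν * deriv f x ^ 2 := by
  rw [(hasDerivAt_energy hf x).deriv]
  linear_combination 2 * deriv f x * hode x

lemma mul_deriv_deriv_deriv (x : ℝ) :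
    x * deriv (deriv (deriv f)) x =
      (2 * ν - 1) * deriv (deriv f) x - f x - x * deriv f x := by
  have h₀ : HasDerivAt f (deriv f x) x := (differentiable_iterate_deriv hf 0 x).hasDerivAt
  have h₁ : HasDerivAt (deriv f) (deriv (deriv f) x) x :=
    (differentiable_iterate_deriv hf 1 x).hasDerivAt
  have h₂ : DifferentiableAt ℝ (deriv (deriv f)) x := differentiable_iterate_deriv hf 2 x
  have key := add_mul_deriv_eq_deriv_of_mul_eq h₂ hode
  rw [((h₁.const_mul (2 * ν)).fun_sub ((hasDerivAt_id' x).fun_mul h₀)).deriv] at key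
  linear_combination key

lemma mul_deriv_v (x : ℝ) :
    x * deriv (v f) x = energy f x + (2 * ν - 1) * v f x := by
  rw [(hasDerivAt_v hf x).deriv, energy, v_apply]
  linear_combination deriv f x * hode x - f x * mul_deriv_deriv_deriv hf hode x

lemma sq_mul_deriv_deriv_v (x : ℝ) :
    x ^ 2 * deriv (deriv (v f)) x =
      4 * ν * deriv f x ^ 2 + (2 * ν - 2) * (energy f x + (2 * ν - 1) * v f x) := by
  have key := add_mul_deriv_eq_deriv_of_mul_eq (differentiable_deriv_v hf x) (mul_deriv_v hf hode)
  rw [((hasDerivAt_energy hf x).fun_add ((hasDerivAt_v hf x).const_mul _)).deriv,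
    ← (hasDerivAt_energy hf x).deriv, ← (hasDerivAt_v hf x).deriv] at key
  linear_combination x * key + mul_deriv_energy hf hode x + (2 * ν - 2) * mul_deriv_v hf hode x

lemma energy_monotoneOn (hν : 0 ≤ ν) : MonotoneOn (energy f) (Ioi 0) :=
  monotoneOn_Ioi_of_deriv_nonneg
    (fun x _ => (hasDerivAt_energy hf x).differentiableAt.differentiableWithinAt)
    fun x hx => nonneg_of_mul_nonneg_right (by rw [mul_deriv_energy hf hode]; positivity) hx

end BesselEquation

section Fn

lemma fn_apply_zero (n : ℕ) : fn n 0 = 0 := by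
  cases n <;> simp [fn]

lemma contDiff_fn (n : ℕ) : ContDiff ℝ ∞ (fn n) := by
  induction n with
  | zero => exact Real.contDiff_sin
  | succ n ih =>
    have hc : Continuous fun t => t * fn n t := continuous_id.mul ih.continuous
    have hderiv : ∀ x, HasDerivAt (fn (n + 1)) (x * fn n x) x := fun x =>
      (hc.integral_hasStrictDerivAt 0 x).hasDerivAt
    rw [contDiff_infty_iff_deriv, funext fun x => (hderiv x).deriv]
    exact ⟨fun x => (hderiv x).differentiableAt, contDiff_id.mul ih⟩

lemma hasDerivAt_fn_succ (n : ℕ) (x : ℝ) : HasDerivAt (fn (n + 1)) (x * fn n x) x :=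
  ((continuous_id.mul (contDiff_fn n).continuous).integral_hasStrictDerivAt 0 x).hasDerivAt

lemma deriv_fn_succ (n : ℕ) : deriv (fn (n + 1)) = fun x => x * fn n x :=
  funext fun x => (hasDerivAt_fn_succ n x).deriv

lemma hasDerivAt_fn (n : ℕ) (x : ℝ) : HasDerivAt (fn n) (deriv (fn n) x) x :=
  ((contDiff_fn n).differentiable (by simp) x).hasDerivAt

lemma hasDerivAt_deriv_fn (n : ℕ) (x : ℝ) :
    HasDerivAt (deriv (fn n)) (deriv (deriv (fn n)) x) x :=
  (differentiable_iterate_deriv (contDiff_fn n) 1 x).hasDerivAt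

lemma deriv_deriv_fn_succ (n : ℕ) (x : ℝ) :
    deriv (deriv (fn (n + 1))) x = fn n x + x * deriv (fn n) x := by
  rw [deriv_fn_succ, ((hasDerivAt_id' x).fun_mul (hasDerivAt_fn n x)).deriv, one_mul]

lemma fn_succ_eq_of_mul_deriv_deriv {n : ℕ}
    (hode : ∀ x, x * deriv (deriv (fn n)) x = 2 * n * deriv (fn n) x - x * fn n x) :
    fn (n + 1) = fun x => (2 * n + 1) * fn n x - x * deriv (fn n) x := by
  have hrhs : ∀ x, HasDerivAt (fun x => (2 * n + 1) * fn n x - x * deriv (fn n) x)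
      (x * fn n x) x := fun x =>
    (((hasDerivAt_fn n x).const_mul _).fun_sub
      ((hasDerivAt_id' x).fun_mul (hasDerivAt_deriv_fn n x))).congr_deriv
      (by linear_combination -hode x)
  refine eq_of_fderiv_eq (fun x => (hasDerivAt_fn_succ n x).differentiableAt)
    (fun x => (hrhs x).differentiableAt) (fun x => ?_) 0 (by simp [fn_apply_zero])
  rw [(hasDerivAt_fn_succ n x).hasFDerivAt.fderiv, (hrhs x).hasFDerivAt.fderiv]

lemma mul_deriv_deriv_fn (n : ℕ) (x : ℝ) :
    x * deriv (deriv (fn n)) x = 2 * n * deriv (fn n) x - x * fn n x := by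
  induction n generalizing x with
  | zero =>
    simp only [fn, Real.deriv_sin, Real.deriv_cos', CharP.cast_eq_zero]
    ring
  | succ n ih =>
    rw [deriv_deriv_fn_succ, deriv_fn_succ, fn_succ_eq_of_mul_deriv_deriv ih]
    push_cast
    ring

lemma fn_pos {n : ℕ} {x : ℝ} (hx₀ : 0 < x) (hxπ : x < Real.pi) : 0 < fn n x := by
  induction n generalizing x with
  | zero => exact Real.sin_pos_of_pos_of_lt_pi hx₀ hxπ
  | succ n ih =>
    refine intervalIntegral.intervalIntegral_pos_of_pos_on
      ((continuous_id.mul (contDiff_fn n).continuous).intervalIntegrable 0 x) (fun t ht => ?_) hx₀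
    exact mul_pos ht.1 (ih ht.1 (ht.2.trans hxπ))

lemma abs_fn_le {n : ℕ} {x : ℝ} (hx : 0 ≤ x) : |fn n x| ≤ x ^ (2 * n + 1) := by
  induction n generalizing x with
  | zero => simpa [fn, abs_of_nonneg hx] using Real.abs_sin_le_abs (x := x)
  | succ n ih =>
    calc |fn (n + 1) x| ≤ ∫ t in (0 : ℝ)..x, |t * fn n t| :=
          intervalIntegral.abs_integral_le_integral_abs hx
      _ ≤ ∫ t in (0 : ℝ)..x, t ^ (2 * n + 2) := by
          refine intervalIntegral.integral_mono_on hx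
            ((continuous_id.mul (contDiff_fn n).continuous).abs.intervalIntegrable 0 x)
            ((continuous_pow _).intervalIntegrable 0 x) fun t ht => ?_
          rw [abs_mul, abs_of_nonneg ht.1, pow_succ' t (2 * n + 1)]
          exact mul_le_mul_of_nonneg_left (ih ht.1) ht.1
      _ = x ^ (2 * (n + 1) + 1) / (2 * n + 3) := by
          rw [integral_pow]
          push_cast
          ring_nf
      _ ≤ x ^ (2 * (n + 1) + 1) := div_le_self (by positivity) (by linarith)

lemma abs_deriv_fn_le {n : ℕ} {x : ℝ} (hx : 0 ≤ x) : |deriv (fn n) x| ≤ x ^ (2 * n) := by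
  cases n with
  | zero => simpa [fn] using Real.abs_cos_le_one x
  | succ n =>
    rw [deriv_fn_succ, abs_mul, abs_of_nonneg hx]
    calc x * |fn n x| ≤ x * x ^ (2 * n + 1) := mul_le_mul_of_nonneg_left (abs_fn_le hx) hx
      _ = x ^ (2 * (n + 1)) := by ring

lemma abs_v_fn_succ_le {n : ℕ} {x : ℝ} (hx : 0 ≤ x) :
    |v (fn (n + 1)) x| ≤ 3 * x ^ (4 * n + 4) := by
  have hf'' : |deriv (deriv (fn (n + 1))) x| ≤ 2 * x ^ (2 * n + 1) := by
    rw [deriv_deriv_fn_succ]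
    calc |fn n x + x * deriv (fn n) x| ≤ |fn n x| + x * |deriv (fn n) x| := by
          rw [← abs_of_nonneg hx, ← abs_mul, abs_of_nonneg hx]; exact abs_add_le _ _
      _ ≤ x ^ (2 * n + 1) + x * x ^ (2 * n) := by
          gcongr
          exacts [abs_fn_le hx, abs_deriv_fn_le hx]
      _ = 2 * x ^ (2 * n + 1) := by ring
  calc |v (fn (n + 1)) x|
      ≤ |deriv (fn (n + 1)) x| ^ 2 + |deriv (deriv (fn (n + 1))) x| * |fn (n + 1) x| := by
        rw [v_apply, ← abs_pow, ← abs_mul]; exact abs_sub _ _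
    _ ≤ (x ^ (2 * (n + 1))) ^ 2 + 2 * x ^ (2 * n + 1) * x ^ (2 * (n + 1) + 1) := by
        gcongr
        exacts [abs_deriv_fn_le hx, abs_fn_le hx]
    _ = 3 * x ^ (4 * n + 4) := by ring

lemma v_fn_succ_isLittleO (n : ℕ) :
    v (fn (n + 1)) =o[𝓝[>] 0] fun x => x ^ (2 * n + 1) := by
  refine IsBigO.trans_isLittleO (g := fun x => x ^ (4 * n + 4)) (.of_bound 3 ?_)
    ((isLittleO_pow_pow (by omega)).mono nhdsWithin_le_nhds)
  filter_upwards [self_mem_nhdsWithin] with x (hx : 0 < x)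
  rw [Real.norm_eq_abs, norm_pow, Real.norm_of_nonneg hx.le]
  exact abs_v_fn_succ_le hx.le

lemma energy_fn_pos (n : ℕ) {x : ℝ} (hx : 0 < x) : 0 < energy (fn n) x := by
  have hy : 0 < min x 1 := lt_min hx one_pos
  have hyπ : min x 1 < Real.pi := (min_le_right x 1).trans_lt (by linarith [Real.pi_gt_three])
  calc 0 < energy (fn n) (min x 1) := by
        have := fn_pos (n := n) hy hyπ
        unfold energy; positivity
    _ ≤ energy (fn n) x :=
        energy_monotoneOn (contDiff_fn n) (mul_deriv_deriv_fn n) n.cast_nonneg hy hx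
          (min_le_left x 1)

end Fn

theorem stmt_8 (n : ℕ) (hn : 1 ≤ n) :
    (∀ x > (0 : ℝ), 0 < v (fn n) x) ∧ MonotoneOn (v (fn n)) (Set.Ioi 0) ∧
    (∀ x > (0 : ℝ), 0 < deriv (v (fn n)) x) ∧ MonotoneOn (deriv (v (fn n))) (Set.Ioi 0) ∧
    (∀ x > (0 : ℝ), 0 ≤ deriv^[2] (v (fn n)) x) := by
  obtain ⟨m, rfl⟩ := Nat.exists_eq_add_of_le' hn
  have hf := contDiff_fn (m + 1)
  have hode := mul_deriv_deriv_fn (m + 1)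
  have hv : ∀ x > (0 : ℝ), 0 < v (fn (m + 1)) x := fun x hx =>
    pos_of_natCast_mul_lt_mul_deriv (differentiable_v hf).differentiableOn
      (fun y hy => by rw [mul_deriv_v hf hode]; push_cast; linarith [energy_fn_pos (m + 1) hy])
      (v_fn_succ_isLittleO m) hx
  have hν : (1 : ℝ) ≤ (m + 1 : ℕ) := by simp
  have hv' : ∀ x > (0 : ℝ), 0 < deriv (v (fn (m + 1))) x := fun x hx => by
    refine pos_of_mul_pos_right ?_ hx.le
    rw [mul_deriv_v hf hode]
    exact add_pos (energy_fn_pos _ hx) (mul_pos (by linarith) (hv x hx))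
  have hv'' : ∀ x > (0 : ℝ), 0 ≤ deriv (deriv (v (fn (m + 1)))) x := fun x hx => by
    refine nonneg_of_mul_nonneg_right ?_ (pow_pos hx 2)
    rw [sq_mul_deriv_deriv_v hf hode]
    exact add_nonneg (by positivity) (mul_nonneg (by linarith)
      (add_nonneg (energy_fn_pos _ hx).le (mul_nonneg (by linarith) (hv x hx).le)))
  exact ⟨hv, monotoneOn_Ioi_of_deriv_nonneg (differentiable_v hf).differentiableOn
    (fun x hx => (hv' x hx).le), hv',
    monotoneOn_Ioi_of_deriv_nonneg (differentiable_deriv_v hf).differentiableOn hv'', hv''⟩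
end

section
/- Let p, q be three times continuously differentiable real functions on an interval (a,b) and let f be a solution of f'' + p·f' + q·f = 0 on (a,b) (so f is five times differentiable). Then w(f)' + p·w(f) = (p'·f' + q'·f)·( (p'' + q')·f'·f + q''·f² + p'·(f')² ) − A'·v(f) on (a,b), where A = (p'' − p'·p + 2q')·f' + (−2p'·q + q'' + p·q')·f. In the case q' ≡ 0 this simplifies to w(f)' + p·w(f) = p'·(f')²·(p''·f + p'·f') − A'·v(f). -/
/-- Determinant of the 3x3 Hankel-Wronskian matrix of h (rows of 2nd..4th derivatives). -/
noncomputable def w (f : ℝ → ℝ) (x : ℝ) : ℝ :=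
  Matrix.det !![deriv^[2] f x, deriv f x, f x;
    deriv^[3] f x, deriv^[2] f x, deriv f x;
    deriv^[4] f x, deriv^[3] f x, deriv^[2] f x]

open Set Finset

section IteratedDeriv

variable {𝕜 : Type*} [NontriviallyNormedField 𝕜] {s : Set 𝕜} {x : 𝕜}

theorem ContDiffOn.differentiableOn_iterate_deriv_of_isOpen {f : 𝕜 → 𝕜} {n k : ℕ}
    (hf : ContDiffOn 𝕜 n f s) (hs : IsOpen s) (hk : k < n) :
    DifferentiableOn 𝕜 (deriv^[k] f) s :=
  (hf.differentiableOn_iteratedDerivWithin (by exact_mod_cast hk) hs.uniqueDiffOn).congr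
    fun _ hy => (iteratedDerivWithin_of_isOpen_eq_iterate hs hy).symm

theorem ContDiffOn.hasDerivAt_iterate_deriv {f : 𝕜 → 𝕜} {n k : ℕ}
    (hf : ContDiffOn 𝕜 n f s) (hs : IsOpen s) (hk : k < n) (hx : x ∈ s) :
    HasDerivAt (deriv^[k] f) (deriv^[k + 1] f x) x := by
  rw [Function.iterate_succ_apply']
  exact ((hf.differentiableOn_iterate_deriv_of_isOpen hs hk x hx).differentiableAt
    (hs.mem_nhds hx)).hasDerivAt

theorem iterate_deriv_add_two_eq_of_ode {p q f : 𝕜 → 𝕜} {k : ℕ} (hs : IsOpen s)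
    (hp : ContDiffOn 𝕜 k p s) (hq : ContDiffOn 𝕜 k q s) (hf : ContDiffOn 𝕜 (k + 1) f s)
    (hode : ∀ y ∈ s, deriv^[2] f y + p y * deriv f y + q y * f y = 0) (hx : x ∈ s) :
    deriv^[k + 2] f x = -∑ i ∈ range (k + 1), (k.choose i : 𝕜) *
      (deriv^[i] p x * deriv^[k - i + 1] f x + deriv^[i] q x * deriv^[k - i] f x) := by
  have hf' : ContDiffOn 𝕜 k (deriv f) s := hf.deriv_of_isOpen hs le_rfl
  have heq : EqOn (deriv^[2] f) (-(p * deriv f + q * f)) s := fun y hy => by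
    simp only [Pi.neg_apply, Pi.add_apply, Pi.mul_apply]
    linear_combination hode y hy
  have hxn := hs.mem_nhds hx
  have hp' : ContDiffAt 𝕜 k p x := hp.contDiffAt hxn
  have hq' : ContDiffAt 𝕜 k q x := hq.contDiffAt hxn
  have hf₀ : ContDiffAt 𝕜 k f x := (hf.contDiffAt hxn).of_le (by exact_mod_cast k.le_succ)
  have hf₁ : ContDiffAt 𝕜 k (deriv f) x := hf'.contDiffAt hxn
  have := heq.iteratedDeriv_of_isOpen hs k hx
  rw [iteratedDeriv_eq_iterate, ← Function.iterate_add_apply, iteratedDeriv_neg,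
    iteratedDeriv_add (f := p * deriv f) (g := q * f) (hp'.mul hf₁) (hq'.mul hf₀),
    iteratedDeriv_mul hp' hf₁, iteratedDeriv_mul hq' hf₀,
    ← sum_add_distrib] at this
  rw [this]
  congr 1
  refine sum_congr rfl fun i _ => ?_
  simp only [iteratedDeriv_eq_iterate, ← Function.iterate_succ_apply]
  ring

end IteratedDeriv

theorem hasDerivAt_w {f : ℝ → ℝ} {x : ℝ} (hf : ∀ k < 5, DifferentiableAt ℝ (deriv^[k] f) x) :
    HasDerivAt (w f) (Matrix.det !![deriv^[2] f x, deriv f x, f x;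
      deriv^[3] f x, deriv^[2] f x, deriv f x;
      deriv^[5] f x, deriv^[4] f x, deriv^[3] f x]) x := by
  have d (k : ℕ) (hk : k < 5 := by norm_num) : HasDerivAt (deriv^[k] f) (deriv^[k + 1] f x) x := by
    rw [Function.iterate_succ_apply']
    exact (hf k hk).hasDerivAt
  have hw : w f = fun y =>
      deriv^[2] f y * (deriv^[2] f y * deriv^[2] f y - deriv f y * deriv^[3] f y) -
        deriv f y * (deriv^[3] f y * deriv^[2] f y - deriv f y * deriv^[4] f y) +
        f y * (deriv^[3] f y * deriv^[3] f y - deriv^[2] f y * deriv^[4] f y) := by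
    funext y
    simp only [w, Matrix.det_fin_three, Matrix.of_apply, Matrix.cons_val', Matrix.cons_val_zero,
      Matrix.cons_val_fin_one, Matrix.cons_val_one, Matrix.cons_val]
    ring
  rw [hw]
  refine ((((d 2).fun_mul (((d 2).fun_mul (d 2)).fun_sub ((d 1).fun_mul (d 3)))).fun_sub
    ((d 1).fun_mul (((d 3).fun_mul (d 2)).fun_sub ((d 1).fun_mul (d 4))))).fun_add
    ((d 0).fun_mul (((d 3).fun_mul (d 3)).fun_sub ((d 2).fun_mul (d 4))))).congr_deriv ?_
  simp only [Matrix.det_fin_three, Matrix.of_apply, Matrix.cons_val', Matrix.cons_val_zero,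
    Matrix.cons_val_fin_one, Matrix.cons_val_one, Matrix.cons_val, Nat.reduceAdd,
    Function.iterate_zero, id_eq, Function.iterate_one]
  ring

theorem deriv_w_add_mul_w_eq {p q f A : ℝ → ℝ} {s : Set ℝ} (hs : IsOpen s)
    (hp : ContDiffOn ℝ 3 p s) (hq : ContDiffOn ℝ 3 q s) (hf : ContDiffOn ℝ 5 f s)
    (hode : ∀ y ∈ s, deriv^[2] f y + p y * deriv f y + q y * f y = 0)
    (hA : A = fun y => (deriv^[2] p y - deriv p y * p y + 2 * deriv q y) * deriv f y +
      (-2 * deriv p y * q y + deriv^[2] q y + p y * deriv q y) * f y) {x : ℝ} (hx : x ∈ s) :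
    deriv (w f) x + p x * w f x =
      (deriv p x * deriv f x + deriv q x * f x) *
        ((deriv^[2] p x + deriv q x) * deriv f x * f x + deriv^[2] q x * (f x) ^ 2 +
          deriv p x * (deriv f x) ^ 2) - deriv A x * v f x := by
  have dp (k : ℕ) (hk : k < 3 := by norm_num) := hp.hasDerivAt_iterate_deriv hs hk hx
  have dq (k : ℕ) (hk : k < 3 := by norm_num) := hq.hasDerivAt_iterate_deriv hs hk hx
  have df (k : ℕ) (hk : k < 5 := by norm_num) := hf.hasDerivAt_iterate_deriv hs hk hx
  have hw' : deriv (w f) x = _ := (hasDerivAt_w fun k hk => (df k hk).differentiableAt).deriv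
  have hA' : deriv A x = _ := (congrArg (deriv · x) hA).trans <| HasDerivAt.deriv <|
    ((((dp 2).fun_sub ((dp 1).fun_mul (dp 0))).fun_add ((dq 1).const_mul 2)).fun_mul (df 1)).fun_add
      ((((((dp 1).const_mul (-2)).fun_mul (dq 0)).fun_add (dq 2)).fun_add
        ((dp 0).fun_mul (dq 1))).fun_mul (df 0))
  have hleibniz (k : ℕ) (hk : k ≤ 3 := by norm_num) := iterate_deriv_add_two_eq_of_ode hs
    (hp.of_le (by exact_mod_cast hk)) (hq.of_le (by exact_mod_cast hk))
    (hf.of_le (by exact_mod_cast (by omega : k + 1 ≤ 5))) hode hx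
  have h2 := hleibniz 0
  have h3 := hleibniz 1
  have h4 := hleibniz 2
  have h5 := hleibniz 3
  simp only [sum_range_succ, sum_range_zero, Nat.reduceAdd, Nat.reduceSub, Nat.choose_zero_right,
    Nat.choose_one_right, Nat.choose_self, Nat.choose_succ_self_right, Nat.cast_ofNat, Nat.cast_one,
    Function.iterate_zero, id_eq, Function.iterate_one] at h2 h3 h4 h5
  rw [hw', hA', v, w]
  simp only [Matrix.det_fin_three, Matrix.of_apply, Matrix.cons_val', Matrix.cons_val_zero,
    Matrix.cons_val_fin_one, Matrix.cons_val_one, Matrix.cons_val, Nat.reduceAdd,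
    Function.iterate_zero, id_eq, Function.iterate_one]
  rw [h5, h4, h3, h2]
  ring

theorem stmt_14_general (a b : ℝ) (p q f A : ℝ → ℝ)
    (hp : ContDiffOn ℝ 3 p (Set.Ioo a b)) (hq : ContDiffOn ℝ 3 q (Set.Ioo a b))
    (hf : ContDiffOn ℝ 5 f (Set.Ioo a b))
    (hode : ∀ x ∈ Set.Ioo a b, deriv^[2] f x + p x * deriv f x + q x * f x = 0)
    (hA : A = fun y => (deriv^[2] p y - deriv p y * p y + 2 * deriv q y) * deriv f y +
      (-2 * deriv p y * q y + deriv^[2] q y + p y * deriv q y) * f y) :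
    (∀ x ∈ Set.Ioo a b,
      deriv (w f) x + p x * w f x =
        (deriv p x * deriv f x + deriv q x * f x) *
          ((deriv^[2] p x + deriv q x) * deriv f x * f x + deriv^[2] q x * (f x) ^ 2 +
            deriv p x * (deriv f x) ^ 2) - deriv A x * v f x) ∧
    ((∀ x ∈ Set.Ioo a b, deriv q x = 0) →
      ∀ x ∈ Set.Ioo a b,
        deriv (w f) x + p x * w f x =
          deriv p x * (deriv f x) ^ 2 * (deriv^[2] p x * f x + deriv p x * deriv f x) -
            deriv A x * v f x) := by
  have key (x : ℝ) (hx : x ∈ Ioo a b) := deriv_w_add_mul_w_eq isOpen_Ioo hp hq hf hode hA hx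
  refine ⟨key, fun hq' x hx => ?_⟩
  have hq'' : deriv^[2] q x = 0 :=
    (Filter.eventuallyEq_of_mem (isOpen_Ioo.mem_nhds hx) hq').deriv_eq.trans (deriv_const x 0)
  rw [key x hx, hq' x hx, hq'']
  ring

theorem stmt_14 (a b : ℝ) (hab : a < b) (p q f A : ℝ → ℝ)
    (hp : ContDiffOn ℝ 3 p (Set.Ioo a b)) (hq : ContDiffOn ℝ 3 q (Set.Ioo a b))
    (hf : ContDiffOn ℝ 5 f (Set.Ioo a b))
    (hode : ∀ x ∈ Set.Ioo a b, deriv^[2] f x + p x * deriv f x + q x * f x = 0)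
    (hA : A = fun y => (deriv^[2] p y - deriv p y * p y + 2 * deriv q y) * deriv f y +
      (-2 * deriv p y * q y + deriv^[2] q y + p y * deriv q y) * f y) :
    (∀ x ∈ Set.Ioo a b,
      deriv (w f) x + p x * w f x =
        (deriv p x * deriv f x + deriv q x * f x) *
          ((deriv^[2] p x + deriv q x) * deriv f x * f x + deriv^[2] q x * (f x) ^ 2 +
            deriv p x * (deriv f x) ^ 2) - deriv A x * v f x) ∧
    ((∀ x ∈ Set.Ioo a b, deriv q x = 0) →
      ∀ x ∈ Set.Ioo a b,
        deriv (w f) x + p x * w f x =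
          deriv p x * (deriv f x) ^ 2 * (deriv^[2] p x * f x + deriv p x * deriv f x) -
            deriv A x * v f x) :=
  stmt_14_general a b p q f A hp hq hf hode hA
end
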